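/- Let R be a supercommutative superalgebra. Then I_R/I_R² is canonically isomorphic to R₁/R₁³ as an R̄-module, where I_R = (R₁) and R̄ = R/I_R; in particular I_R/I_R² is a purely odd R̄-supermodule. -/

import Mathlib

/-!
Supercommutativity lets every odd generator be moved to the left, so `I_R = R₁ R` and
`I_R² = R₁ R₁ R`. Splitting the last factor into even and odd parts gives `I_R = R₁ + I_R²`,
and since `R₁ R₁ ⊆ R₀`, the odd component of an element of `R₁ R₁ R` lies in `R₁³`. Hence the
projection onto the odd component and the inclusion `R₁ ⊆ I_R` induce mutually inverse maps
between `I_R / I_R²` and `R₁ / R₁³`; the projection commutes with multiplication by even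
elements, which gives `R₀`-linearity.
-/

variable {k R : Type} [Field k] [Ring R] [Algebra k R]

/-- The two-sided ideal generated by the odd part, as a `k`-submodule. -/
def oddIdeal (𝒜 : ZMod 2 → Submodule k R) : Submodule k R :=
  Submodule.span k {x | ∃ r ∈ 𝒜 1, ∃ a b : R, x = a * r * b}

/-- The square of the ideal `I_R`, as a `k`-submodule. -/
def oddIdealSq (𝒜 : ZMod 2 → Submodule k R) : Submodule k R :=
  Submodule.span k {x | ∃ y ∈ oddIdeal 𝒜, ∃ z ∈ oddIdeal 𝒜, x = y * z}

/-- `R₁³`: the span of products of three odd elements. -/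
def oddCube (𝒜 : ZMod 2 → Submodule k R) : Submodule k R :=
  Submodule.span k {x | ∃ a ∈ 𝒜 1, ∃ b ∈ 𝒜 1, ∃ c ∈ 𝒜 1, x = a * b * c}

namespace Submodule

variable {S M N : Type*} [Ring S] [AddCommGroup M] [Module S M] [AddCommGroup N] [Module S N]

def quotientEquivOfLeftInverse (p : Submodule S M) (q : Submodule S N) (π : M →ₗ[S] N)
    (ι : N →ₗ[S] M) (hπ : p ≤ q.comap π) (hι : q ≤ p.comap ι) (hπι : Function.LeftInverse π ι)
    (hιπ : ∀ m, ι (π m) - m ∈ p) : (M ⧸ p) ≃ₗ[S] N ⧸ q :=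
  LinearEquiv.ofLinearMap (p.mapQ q π hπ) (q.mapQ p ι hι)
    (linearMap_qext _ <| LinearMap.ext fun n => by simp [hπι n])
    (linearMap_qext _ <| LinearMap.ext fun m => by simpa using (Quotient.eq p).2 (hιπ m))

end Submodule

def IsSupercommutative (𝒜 : ZMod 2 → Submodule k R) : Prop :=
  ∀ (i j : ZMod 2) (a b : R), a ∈ 𝒜 i → b ∈ 𝒜 j → b * a = ((-1 : ℤ) ^ (i.val * j.val)) • (a * b)

/-- `R₁ R`, which equals `I_R` in the supercommutative case. -/
def oddRightIdeal (𝒜 : ZMod 2 → Submodule k R) : Submodule k R :=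
  Submodule.span k {x | ∃ r ∈ 𝒜 1, ∃ c : R, x = r * c}

/-- `R₁ R₁ R`, which equals `I_R²` in the supercommutative case. -/
def oddSqRightIdeal (𝒜 : ZMod 2 → Submodule k R) : Submodule k R :=
  Submodule.span k {x | ∃ a ∈ 𝒜 1, ∃ b ∈ 𝒜 1, ∃ c : R, x = a * b * c}

section Ideals

variable {𝒜 : ZMod 2 → Submodule k R}

theorem mul_mem_oddRightIdeal {r : R} (hr : r ∈ 𝒜 1) (c : R) : r * c ∈ oddRightIdeal 𝒜 :=
  Submodule.subset_span ⟨r, hr, c, rfl⟩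

theorem mul_mul_mem_oddSqRightIdeal {a b : R} (ha : a ∈ 𝒜 1) (hb : b ∈ 𝒜 1) (c : R) :
    a * b * c ∈ oddSqRightIdeal 𝒜 :=
  Submodule.subset_span ⟨a, ha, b, hb, c, rfl⟩

theorem odd_le_oddIdeal : 𝒜 1 ≤ oddIdeal 𝒜 := fun r hr =>
  Submodule.subset_span ⟨r, hr, 1, 1, by simp⟩

theorem oddSqRightIdeal_le_oddIdealSq : oddSqRightIdeal 𝒜 ≤ oddIdealSq 𝒜 := by
  rw [oddSqRightIdeal, Submodule.span_le]
  rintro _ ⟨a, ha, b, hb, c, rfl⟩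
  exact Submodule.subset_span ⟨a, odd_le_oddIdeal ha,
    b * c, Submodule.subset_span ⟨b, hb, 1, c, by rw [one_mul]⟩, by rw [mul_assoc]⟩

theorem oddCube_le_oddSqRightIdeal : oddCube 𝒜 ≤ oddSqRightIdeal 𝒜 :=
  Submodule.span_le.2 fun _ ⟨_, ha, _, hb, c, _, hx⟩ => hx ▸ mul_mul_mem_oddSqRightIdeal ha hb c

theorem oddCube_le_oddIdealSq : oddCube 𝒜 ≤ oddIdealSq 𝒜 :=
  oddCube_le_oddSqRightIdeal.trans oddSqRightIdeal_le_oddIdealSq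

end Ideals

section Graded

variable (𝒜 : ZMod 2 → Submodule k R) [GradedAlgebra 𝒜]

noncomputable def oddPart : R →ₗ[k] 𝒜 1 :=
  DirectSum.component k (ZMod 2) (fun i => 𝒜 i) 1 ∘ₗ (DirectSum.decomposeLinearEquiv 𝒜).toLinearMap

theorem coe_oddPart (x : R) : (oddPart 𝒜 x : R) = DirectSum.decompose 𝒜 x 1 := rfl

variable {𝒜}

theorem coe_oddPart_of_mem_odd {x : R} (hx : x ∈ 𝒜 1) : (oddPart 𝒜 x : R) = x := by
  rw [coe_oddPart, DirectSum.decompose_of_mem_same 𝒜 hx]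

theorem coe_oddPart_even_mul {b : R} (hb : b ∈ 𝒜 0) (x : R) :
    (oddPart 𝒜 (b * x) : R) = b * oddPart 𝒜 x :=
  DirectSum.coe_decompose_mul_of_left_mem_zero 𝒜 hb

theorem even_mul_mem_oddCube {b x : R} (hb : b ∈ 𝒜 0) (hx : x ∈ oddCube 𝒜) :
    b * x ∈ oddCube 𝒜 := by
  induction hx using Submodule.span_induction with
  | mem x hx =>
    obtain ⟨a, ha, a', ha', c, hc, rfl⟩ := hx
    rw [← mul_assoc, ← mul_assoc]
    exact Submodule.subset_span ⟨b * a, SetLike.mul_mem_graded hb ha, a', ha', c, hc, rfl⟩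
  | zero => simp
  | add x y _ _ hx hy => simpa [mul_add] using add_mem hx hy
  | smul a x _ hx => simpa using Submodule.smul_mem _ a hx

theorem oddPart_mem_oddCube_of_mem_oddSqRightIdeal {x : R} (hx : x ∈ oddSqRightIdeal 𝒜) :
    (oddPart 𝒜 x : R) ∈ oddCube 𝒜 := by
  induction hx using Submodule.span_induction with
  | mem x hx =>
    obtain ⟨a, ha, b, hb, c, rfl⟩ := hx
    rw [coe_oddPart_even_mul (SetLike.mul_mem_graded ha hb)]
    exact Submodule.subset_span ⟨a, ha, b, hb, _, (oddPart 𝒜 c).2, rfl⟩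
  | zero => simp
  | add x y _ _ hx hy => simpa using add_mem hx hy
  | smul a x _ hx => simpa using Submodule.smul_mem _ a hx

theorem odd_mul_mem_odd_sup_oddSqRightIdeal {r : R} (hr : r ∈ 𝒜 1) (c : R) :
    r * c ∈ 𝒜 1 ⊔ oddSqRightIdeal 𝒜 := by
  induction c using DirectSum.Decomposition.inductionOn 𝒜 with
  | zero => simp
  | add c c' hc hc' => simpa [mul_add] using add_mem hc hc'
  | @homogeneous i c =>
    obtain rfl | rfl : i = 0 ∨ i = 1 := by decide +revert
    · exact Submodule.mem_sup_left (SetLike.mul_mem_graded hr c.2)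
    · exact Submodule.mem_sup_right (mul_one (r * c) ▸ mul_mul_mem_oddSqRightIdeal hr c.2 1)

theorem oddRightIdeal_le_odd_sup_oddSqRightIdeal :
    oddRightIdeal 𝒜 ≤ 𝒜 1 ⊔ oddSqRightIdeal 𝒜 := by
  rw [oddRightIdeal, Submodule.span_le]
  rintro _ ⟨r, hr, c, rfl⟩
  exact odd_mul_mem_odd_sup_oddSqRightIdeal hr c

end Graded

section Supercommutative

variable {𝒜 : ZMod 2 → Submodule k R} [GradedAlgebra 𝒜]

theorem IsSupercommutative.oddIdeal_le_oddRightIdeal (hsc : IsSupercommutative 𝒜) :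
    oddIdeal 𝒜 ≤ oddRightIdeal 𝒜 := by
  rw [oddIdeal, Submodule.span_le]
  rintro _ ⟨r, hr, a, b, rfl⟩
  induction a using DirectSum.Decomposition.inductionOn 𝒜 with
  | zero => simp
  | add a a' ha ha' => simpa [add_mul] using add_mem ha ha'
  | @homogeneous i a =>
    rw [hsc 1 i r a hr a.2, smul_mul_assoc, mul_assoc]
    exact zsmul_mem (mul_mem_oddRightIdeal hr (a * b)) _

theorem IsSupercommutative.oddIdealSq_le_oddSqRightIdeal (hsc : IsSupercommutative 𝒜) :
    oddIdealSq 𝒜 ≤ oddSqRightIdeal 𝒜 := by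
  rw [oddIdealSq, Submodule.span_le]
  rintro _ ⟨y, hy, z, hz, rfl⟩
  have hyz := Submodule.mul_mem_mul (hsc.oddIdeal_le_oddRightIdeal hy)
    (hsc.oddIdeal_le_oddRightIdeal hz)
  rw [oddRightIdeal, Submodule.span_mul_span] at hyz
  refine Submodule.span_le.2 ?_ hyz
  rintro _ ⟨_, ⟨r, hr, c, rfl⟩, _, ⟨r', hr', c', rfl⟩, rfl⟩
  change r * c * (r' * c') ∈ oddSqRightIdeal 𝒜
  induction c using DirectSum.Decomposition.inductionOn 𝒜 with
  | zero => simp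
  | add c d hc hd => simpa [mul_add, add_mul] using add_mem hc hd
  | @homogeneous i c =>
    have hswap : r * c * (r' * c') =
        ((-1 : ℤ) ^ ((1 : ZMod 2).val * i.val)) • (r * r' * (c * c')) := by
      rw [mul_assoc r, ← mul_assoc (c : R), hsc 1 i r' c hr' c.2]
      simp only [smul_mul_assoc, mul_smul_comm, mul_assoc]
    rw [hswap]
    exact zsmul_mem (mul_mul_mem_oddSqRightIdeal hr hr' (c * c')) _

theorem IsSupercommutative.oddPart_mem_oddCube (hsc : IsSupercommutative 𝒜) {x : R}
    (hx : x ∈ oddIdealSq 𝒜) : (oddPart 𝒜 x : R) ∈ oddCube 𝒜 :=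
  oddPart_mem_oddCube_of_mem_oddSqRightIdeal (hsc.oddIdealSq_le_oddSqRightIdeal hx)

theorem IsSupercommutative.oddPart_sub_mem_oddIdealSq (hsc : IsSupercommutative 𝒜) {x : R}
    (hx : x ∈ oddIdeal 𝒜) : (oddPart 𝒜 x : R) - x ∈ oddIdealSq 𝒜 := by
  obtain ⟨s, hs, t, ht, rfl⟩ := Submodule.mem_sup.mp
    (oddRightIdeal_le_odd_sup_oddSqRightIdeal (hsc.oddIdeal_le_oddRightIdeal hx))
  rw [map_add, Submodule.coe_add, coe_oddPart_of_mem_odd hs, add_sub_add_left_eq_sub]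
  exact sub_mem (oddCube_le_oddIdealSq (oddPart_mem_oddCube_of_mem_oddSqRightIdeal ht))
    (oddSqRightIdeal_le_oddIdealSq ht)

variable (hsc : IsSupercommutative 𝒜)

noncomputable def IsSupercommutative.conormalEquiv :
    (oddIdeal 𝒜 ⧸ (oddIdealSq 𝒜).comap (oddIdeal 𝒜).subtype) ≃ₗ[k]
      (𝒜 1 ⧸ (oddCube 𝒜).comap (𝒜 1).subtype) :=
  Submodule.quotientEquivOfLeftInverse _ _ (oddPart 𝒜 ∘ₗ (oddIdeal 𝒜).subtype)
    (Submodule.inclusion odd_le_oddIdeal) (fun _ hx => hsc.oddPart_mem_oddCube hx)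
    (fun _ hx => oddCube_le_oddIdealSq hx) (fun x => Subtype.ext (coe_oddPart_of_mem_odd x.2))
    (fun x => hsc.oddPart_sub_mem_oddIdealSq x.2)

theorem IsSupercommutative.conormalEquiv_mk (x : oddIdeal 𝒜) :
    hsc.conormalEquiv (Submodule.Quotient.mk x) = Submodule.Quotient.mk (oddPart 𝒜 x) :=
  rfl

theorem IsSupercommutative.conormalEquiv_mk_of_mem_odd {r : R} (h1 : r ∈ 𝒜 1)
    (hI : r ∈ oddIdeal 𝒜) :
    hsc.conormalEquiv (Submodule.Quotient.mk ⟨r, hI⟩) = Submodule.Quotient.mk ⟨r, h1⟩ := by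
  rw [conormalEquiv_mk]
  exact congrArg _ (Subtype.ext (coe_oddPart_of_mem_odd h1))

theorem IsSupercommutative.conormalEquiv_mk_even_mul {b x y : R} (hb : b ∈ 𝒜 0)
    (hxI : x ∈ oddIdeal 𝒜) (hbxI : b * x ∈ oddIdeal 𝒜) (hy : y ∈ 𝒜 1) (hby : b * y ∈ 𝒜 1)
    (he : hsc.conormalEquiv (Submodule.Quotient.mk ⟨x, hxI⟩) = Submodule.Quotient.mk ⟨y, hy⟩) :
    hsc.conormalEquiv (Submodule.Quotient.mk ⟨b * x, hbxI⟩) =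
      Submodule.Quotient.mk ⟨b * y, hby⟩ := by
  rw [conormalEquiv_mk, Submodule.Quotient.eq, Submodule.mem_comap] at he ⊢
  simpa [coe_oddPart_even_mul hb, mul_sub] using even_mul_mem_oddCube hb he

end Supercommutative

theorem conormal_module_eq_odd_mod_oddCube
    (k : Type) [Field k]
    (R : Type) [Ring R] [Algebra k R]
    (𝒜 : ZMod 2 → Submodule k R) [GradedAlgebra 𝒜]
    (hsc : ∀ (i j : ZMod 2) (a b : R), a ∈ 𝒜 i → b ∈ 𝒜 j →
      b * a = ((-1 : ℤ) ^ (i.val * j.val)) • (a * b)) :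
    ∃ e : (↥(oddIdeal 𝒜) ⧸ (oddIdealSq 𝒜).comap (oddIdeal 𝒜).subtype) ≃ₗ[k]
          (↥(𝒜 1) ⧸ (oddCube 𝒜).comap (𝒜 1).subtype),
      -- `e` is induced by the inclusion `R₁ ⊆ I_R`...
      (∀ (r : R) (h1 : r ∈ 𝒜 1) (hI : r ∈ oddIdeal 𝒜),
        e (Submodule.Quotient.mk ⟨r, hI⟩) = Submodule.Quotient.mk ⟨r, h1⟩) ∧
      -- ... and is `R₀`-linear (multiplication by even elements)
      (∀ (b : R), b ∈ 𝒜 0 → ∀ (x : R) (hxI : x ∈ oddIdeal 𝒜) (hbxI : b * x ∈ oddIdeal 𝒜)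
        (y : R) (hy : y ∈ 𝒜 1) (hby : b * y ∈ 𝒜 1),
        e (Submodule.Quotient.mk ⟨x, hxI⟩) = Submodule.Quotient.mk ⟨y, hy⟩ →
        e (Submodule.Quotient.mk ⟨b * x, hbxI⟩) = Submodule.Quotient.mk ⟨b * y, hby⟩) := by
  replace hsc : IsSupercommutative 𝒜 := hsc
  exact ⟨hsc.conormalEquiv, fun _ h1 hI => hsc.conormalEquiv_mk_of_mem_odd h1 hI,
    fun _ hb _ hxI hbxI _ hy hby => hsc.conormalEquiv_mk_even_mul hb hxI hbxI hy hby⟩
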